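/- arXiv:1111.3509 — 2 statements merged into one kernel-verified Lean document; each statement's English description precedes it below -/
import Mathlib

section
/- If the smeared observables A_Λ(j) = Σ_i Λ(j−i)|φ_i⟩⟨φ_i| and B_Γ(k) = Σ_i Γ(k−i)|ψ_i⟩⟨ψ_i| are jointly measurable (i.e., admit a POVM on Z_d×Z_d with these marginals), then they admit a joint observable which is a covariant phase space observable C_T for some density operator T. -/
open Matrix Kronecker Finset
open scoped ComplexOrder

/-- ω = e^{2πi/d} -/
noncomputable def ww (d : ℕ) : ℂ := Complex.exp (2 * Real.pi * Complex.I / d)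

/-- shift unitary U_x φ_k = φ_{k+x} -/
noncomputable def Um (d : ℕ) (x : ZMod d) : Matrix (ZMod d) (ZMod d) ℂ :=
  fun i j => if i = j + x then 1 else 0

/-- modulation unitary V_y φ_k = ω^{yk} φ_k -/
noncomputable def Vm (d : ℕ) (y : ZMod d) : Matrix (ZMod d) (ZMod d) ℂ :=
  Matrix.diagonal fun i => ww d ^ (y * i).val

/-- finite Fourier transform F φ_k = (1/√d) Σ_h ω^{-hk} φ_h -/
noncomputable def Fm (d : ℕ) : Matrix (ZMod d) (ZMod d) ℂ :=
  fun i j => (1 / Real.sqrt d : ℂ) * (ww d)⁻¹ ^ (i * j).val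

/-- the standard orthonormal basis vector φ_k -/
noncomputable def phiV (d : ℕ) (k : ZMod d) : ZMod d → ℂ := Pi.single k 1

/-- ψ_k = F* φ_k -/
noncomputable def psiV (d : ℕ) [NeZero d] (k : ZMod d) : ZMod d → ℂ :=
  (Fm d)ᴴ.mulVec (phiV d k)

/-- A(j) = |φ_j⟩⟨φ_j| -/
noncomputable def Aob (d : ℕ) (j : ZMod d) : Matrix (ZMod d) (ZMod d) ℂ :=
  vecMulVec (phiV d j) (star (phiV d j))

/-- B(k) = |ψ_k⟩⟨ψ_k| -/
noncomputable def Bob (d : ℕ) [NeZero d] (k : ZMod d) : Matrix (ZMod d) (ZMod d) ℂ :=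
  vecMulVec (psiV d k) (star (psiV d k))

/-!
Average the given joint observable over the Weyl–Heisenberg group. With `W(x,y) = U_x V_y`, the
seed `T = d⁻¹ ∑_{x,y} W(x,y) C(-x,-y) W(x,y)*` is a state, and since `W(j,k) W(x,y)` equals
`W(j+x,k+y)` up to a phase, its covariant observable is `d⁻² ∑_{x,y} W(x,y) C(j-x,k-y) W(x,y)*`.
Both smeared observables are covariant (`W(x,y)` shifts `A_Λ` by `x` and `B_Γ` by `y`), so every
conjugated, translated copy of `C` has the same marginals, and hence so does their average.
-/

section Smearing

variable {G M : Type*} [AddCommGroup G] [Fintype G]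

noncomputable def smear [AddCommMonoid M] [Module ℂ M] (μ : G → ℝ) (P : G → M) (j : G) : M :=
  ∑ i, (μ (j - i) : ℂ) • P i

lemma map_smear [AddCommMonoid M] [Module ℂ M] (f : M →ₗ[ℂ] M) (μ : G → ℝ) (P : G → M) (s : G)
    (hf : ∀ i, f (P i) = P (i + s)) (j : G) : f (smear μ P j) = smear μ P (j + s) := by
  simp only [smear, map_sum, map_smul, hf]
  exact Fintype.sum_equiv (Equiv.addRight s) _ _ fun i => by
    rw [Equiv.coe_addRight, add_sub_add_right_eq_sub]

lemma trace_smear {n : Type*} [Fintype n] (μ : G → ℝ) (P : G → Matrix n n ℂ)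
    (hP : ∀ i, (P i).trace = 1) (j : G) : (smear μ P j).trace = ∑ i, μ i := by
  simp only [smear, trace_sum, trace_smul, hP, smul_eq_mul, mul_one]
  rw [← Complex.ofReal_sum]
  exact congrArg _ (Fintype.sum_equiv (Equiv.subLeft j) _ _ fun _ => rfl)

end Smearing

section WeylHeisenberg

variable {d : ℕ}

lemma Aob_apply (i p q : ZMod d) : Aob d i p q = if p = i ∧ q = i then 1 else 0 := by
  by_cases hp : p = i <;> by_cases hq : q = i <;>
    simp [Aob, vecMulVec_apply, phiV, hp, hq]

variable [NeZero d]

local notation "χ" => (ZMod.stdAddChar : AddChar (ZMod d) ℂ)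

lemma ww_pow_val (a : ZMod d) : ww d ^ a.val = χ a := by
  rw [ZMod.stdAddChar_apply, ZMod.toCircle_apply, ww, ← Complex.exp_nat_mul]
  congr 1
  ring

lemma Um_mul_apply (x : ZMod d) (N : Matrix (ZMod d) (ZMod d) ℂ) (p q : ZMod d) :
    (Um d x * N) p q = N (p - x) q := by
  simp [Um, Matrix.mul_apply, ite_mul, ← sub_eq_iff_eq_add]

lemma mul_conjTranspose_Um_apply (x : ZMod d) (N : Matrix (ZMod d) (ZMod d) ℂ) (p q : ZMod d) :
    (N * (Um d x)ᴴ) p q = N p (q - x) := by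
  simp [Um, Matrix.mul_apply, Matrix.conjTranspose_apply, apply_ite star, ← sub_eq_iff_eq_add]

lemma Vm_eq_diagonal (y : ZMod d) : Vm d y = diagonal fun i => χ (y * i) := by
  simp only [Vm, ww_pow_val]

lemma conjTranspose_Vm_eq_diagonal (y : ZMod d) :
    (Vm d y)ᴴ = diagonal fun i => χ (-(y * i)) := by
  rw [Vm_eq_diagonal, diagonal_conjTranspose]
  congr 1
  ext i
  exact (AddChar.map_neg_eq_conj χ _).symm

variable (d) in
noncomputable def weylConj (x y : ZMod d) :
    Matrix (ZMod d) (ZMod d) ℂ →ₗ[ℂ] Matrix (ZMod d) (ZMod d) ℂ where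
  toFun M := Um d x * Vm d y * M * (Vm d y)ᴴ * (Um d x)ᴴ
  map_add' M N := by simp only [Matrix.mul_add, Matrix.add_mul]
  map_smul' c M := by simp only [Matrix.mul_smul, Matrix.smul_mul, RingHom.id_apply]

lemma weylConj_apply (x y : ZMod d) (M : Matrix (ZMod d) (ZMod d) ℂ) :
    weylConj d x y M = Um d x * Vm d y * M * (Vm d y)ᴴ * (Um d x)ᴴ := rfl

lemma weylConj_apply_apply (x y : ZMod d) (M : Matrix (ZMod d) (ZMod d) ℂ) (p q : ZMod d) :
    weylConj d x y M p q = χ (y * (p - q)) * M (p - x) (q - x) := by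
  rw [weylConj_apply, mul_conjTranspose_Um_apply, Matrix.mul_assoc (Um d x), Matrix.mul_assoc,
    Um_mul_apply, conjTranspose_Vm_eq_diagonal, Matrix.mul_diagonal, Vm_eq_diagonal,
    Matrix.diagonal_mul, mul_right_comm, ← AddChar.map_add_eq_mul]
  congr 2
  ring

lemma weylConj_weylConj (j k x y : ZMod d) (M : Matrix (ZMod d) (ZMod d) ℂ) :
    weylConj d j k (weylConj d x y M) = weylConj d (j + x) (k + y) M := by
  ext p q
  simp only [weylConj_apply_apply, ← mul_assoc, ← AddChar.map_add_eq_mul]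
  ring_nf

lemma trace_weylConj (x y : ZMod d) (M : Matrix (ZMod d) (ZMod d) ℂ) :
    (weylConj d x y M).trace = M.trace := by
  simp only [Matrix.trace, Matrix.diag, weylConj_apply_apply, sub_self, mul_zero,
    AddChar.map_zero_eq_one, one_mul]
  exact Fintype.sum_equiv (Equiv.subRight x) _ _ fun _ => rfl

lemma posSemidef_weylConj {M : Matrix (ZMod d) (ZMod d) ℂ} (hM : M.PosSemidef) (x y : ZMod d) :
    (weylConj d x y M).PosSemidef := by
  simpa only [weylConj_apply, conjTranspose_mul, Matrix.mul_assoc] using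
    hM.mul_mul_conjTranspose_same (Um d x * Vm d y)

lemma psiV_apply (k m : ZMod d) : psiV d k m = (Real.sqrt d : ℂ)⁻¹ * χ (k * m) := by
  simp [psiV, phiV, Fm, mulVec, dotProduct, Pi.single_apply, inv_pow, ww_pow_val,
    AddChar.inv_apply_eq_conj]

lemma Bob_apply (k p q : ZMod d) : Bob d k p q = (d : ℂ)⁻¹ * χ (k * (p - q)) := by
  have hsqrt : (Real.sqrt d : ℂ)⁻¹ * (Real.sqrt d : ℂ)⁻¹ = (d : ℂ)⁻¹ := by
    rw [← mul_inv, ← Complex.ofReal_mul, Real.mul_self_sqrt d.cast_nonneg, Complex.ofReal_natCast]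
  simp only [Bob, vecMulVec_apply, Pi.star_apply, psiV_apply, star_mul', Complex.star_def,
    map_inv₀, Complex.conj_ofReal, ← AddChar.map_neg_eq_conj]
  rw [mul_mul_mul_comm, hsqrt, ← AddChar.map_add_eq_mul, mul_sub, sub_eq_add_neg]

lemma trace_Aob (i : ZMod d) : (Aob d i).trace = 1 := by
  simp [Matrix.trace, Aob_apply]

lemma weylConj_Aob (x y i : ZMod d) : weylConj d x y (Aob d i) = Aob d (i + x) := by
  ext p q
  simp only [weylConj_apply_apply, Aob_apply, sub_eq_iff_eq_add]
  split_ifs with h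
  · rw [h.1, h.2, sub_self, mul_zero, AddChar.map_zero_eq_one, one_mul]
  · rw [mul_zero]

lemma weylConj_Bob (x y k : ZMod d) : weylConj d x y (Bob d k) = Bob d (k + y) := by
  ext p q
  simp only [weylConj_apply_apply, Bob_apply, sub_sub_sub_cancel_right]
  rw [mul_left_comm, ← AddChar.map_add_eq_mul, ← add_mul, add_comm y]

variable (d) in
noncomputable def covariantSeed (C : ZMod d → ZMod d → Matrix (ZMod d) (ZMod d) ℂ) :
    Matrix (ZMod d) (ZMod d) ℂ :=
  (d : ℂ)⁻¹ • ∑ x, ∑ y, weylConj d x y (C (-x) (-y))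

lemma weylConj_covariantSeed (C : ZMod d → ZMod d → Matrix (ZMod d) (ZMod d) ℂ) (j k : ZMod d) :
    weylConj d j k (covariantSeed d C) =
      (d : ℂ)⁻¹ • ∑ x, ∑ y, weylConj d x y (C (j - x) (k - y)) := by
  rw [covariantSeed, LinearMap.map_smul]
  congr 1
  rw [map_sum]
  refine Fintype.sum_equiv (Equiv.addLeft j) _ _ fun x => ?_
  rw [map_sum]
  refine Fintype.sum_equiv (Equiv.addLeft k) _ _ fun y => ?_
  rw [weylConj_weylConj, Equiv.coe_addLeft, Equiv.coe_addLeft, sub_add_cancel_left,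
    sub_add_cancel_left]

lemma inv_smul_inv_smul_sum_sum_const (A : Matrix (ZMod d) (ZMod d) ℂ) :
    (d : ℂ)⁻¹ • (d : ℂ)⁻¹ • ∑ _x : ZMod d, ∑ _y : ZMod d, A = A := by
  have hd : (d : ℂ) ≠ 0 := Nat.cast_ne_zero.2 (NeZero.ne d)
  simp only [Finset.sum_const, Finset.card_univ, ZMod.card, ← Nat.cast_smul_eq_nsmul ℂ, smul_smul]
  rw [inv_mul_cancel_left₀ hd, inv_mul_cancel₀ hd, one_smul]

lemma sum_right_weylConj_covariantSeed {C : ZMod d → ZMod d → Matrix (ZMod d) (ZMod d) ℂ}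
    {A : ZMod d → Matrix (ZMod d) (ZMod d) ℂ} (hC : ∀ j, ∑ k, C j k = A j)
    (hA : ∀ x y j, weylConj d x y (A j) = A (j + x)) (j : ZMod d) :
    ∑ k, (d : ℂ)⁻¹ • weylConj d j k (covariantSeed d C) = A j := by
  have hfiber : ∀ x y, ∑ k, weylConj d x y (C (j - x) (k - y)) = A j := fun x y => by
    rw [← map_sum, Fintype.sum_equiv (Equiv.subRight y) (fun k => C (j - x) (k - y)) (C (j - x))
      fun _ => rfl, hC, hA, sub_add_cancel]
  calc ∑ k, (d : ℂ)⁻¹ • weylConj d j k (covariantSeed d C)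
      = (d : ℂ)⁻¹ • (d : ℂ)⁻¹ • ∑ x, ∑ y, ∑ k, weylConj d x y (C (j - x) (k - y)) := by
        simp only [weylConj_covariantSeed, ← Finset.smul_sum]
        rw [Finset.sum_comm]
        exact congrArg ((d : ℂ)⁻¹ • (d : ℂ)⁻¹ • ·) (Finset.sum_congr rfl fun x _ => Finset.sum_comm)
    _ = (d : ℂ)⁻¹ • (d : ℂ)⁻¹ • ∑ _x : ZMod d, ∑ _y : ZMod d, A j := by simp only [hfiber]
    _ = A j := inv_smul_inv_smul_sum_sum_const (A j)

lemma sum_left_weylConj_covariantSeed {C : ZMod d → ZMod d → Matrix (ZMod d) (ZMod d) ℂ}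
    {B : ZMod d → Matrix (ZMod d) (ZMod d) ℂ} (hC : ∀ k, ∑ j, C j k = B k)
    (hB : ∀ x y k, weylConj d x y (B k) = B (k + y)) (k : ZMod d) :
    ∑ j, (d : ℂ)⁻¹ • weylConj d j k (covariantSeed d C) = B k := by
  have hfiber : ∀ x y, ∑ j, weylConj d x y (C (j - x) (k - y)) = B k := fun x y => by
    rw [← map_sum, Fintype.sum_equiv (Equiv.subRight x) (fun j => C (j - x) (k - y))
      (fun j => C j (k - y)) fun _ => rfl, hC, hB, sub_add_cancel]
  calc ∑ j, (d : ℂ)⁻¹ • weylConj d j k (covariantSeed d C)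
      = (d : ℂ)⁻¹ • (d : ℂ)⁻¹ • ∑ x, ∑ y, ∑ j, weylConj d x y (C (j - x) (k - y)) := by
        simp only [weylConj_covariantSeed, ← Finset.smul_sum]
        rw [Finset.sum_comm]
        exact congrArg ((d : ℂ)⁻¹ • (d : ℂ)⁻¹ • ·) (Finset.sum_congr rfl fun x _ => Finset.sum_comm)
    _ = (d : ℂ)⁻¹ • (d : ℂ)⁻¹ • ∑ _x : ZMod d, ∑ _y : ZMod d, B k := by simp only [hfiber]
    _ = B k := inv_smul_inv_smul_sum_sum_const (B k)

lemma trace_covariantSeed {C : ZMod d → ZMod d → Matrix (ZMod d) (ZMod d) ℂ}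
    {A : ZMod d → Matrix (ZMod d) (ZMod d) ℂ} (hC : ∀ j, ∑ k, C j k = A j)
    (hA : ∀ j, (A j).trace = 1) : (covariantSeed d C).trace = 1 := by
  have hd : (d : ℂ) ≠ 0 := Nat.cast_ne_zero.2 (NeZero.ne d)
  have hrow : ∀ x, ∑ y, (C (-x) (-y)).trace = 1 := fun x => by
    rw [← trace_sum, Fintype.sum_equiv (Equiv.neg _) (fun y => C (-x) (-y)) (C (-x))
      fun _ => rfl, hC, hA]
  simp only [covariantSeed, trace_smul, trace_sum, trace_weylConj, hrow, Finset.sum_const,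
    Finset.card_univ, ZMod.card, nsmul_eq_mul, mul_one, smul_eq_mul, inv_mul_cancel₀ hd]

lemma posSemidef_covariantSeed {C : ZMod d → ZMod d → Matrix (ZMod d) (ZMod d) ℂ}
    (hC : ∀ j k, (C j k).PosSemidef) : (covariantSeed d C).PosSemidef :=
  (posSemidef_sum _ fun x _ => posSemidef_sum _ fun y _ => posSemidef_weylConj (hC _ _) x y).smul
    (by positivity)

end WeylHeisenberg

theorem jointly_measurable_implies_covariant_joint_general (d : ℕ) [NeZero d]
    (Λ Γ : ZMod d → ℝ) (hΛsum : ∑ i : ZMod d, Λ i = 1)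
    (C : ZMod d → ZMod d → Matrix (ZMod d) (ZMod d) ℂ)
    (hpos : ∀ j k, (C j k).PosSemidef)
    (hmargA : ∀ j, ∑ k : ZMod d, C j k = ∑ i : ZMod d, (Λ (j - i) : ℂ) • Aob d i)
    (hmargB : ∀ k, ∑ j : ZMod d, C j k = ∑ i : ZMod d, (Γ (k - i) : ℂ) • Bob d i) :
    ∃ T : Matrix (ZMod d) (ZMod d) ℂ, T.PosSemidef ∧ T.trace = 1 ∧
      (∀ j : ZMod d, ∑ k : ZMod d,
          (1 / d : ℂ) • (Um d j * Vm d k * T * (Vm d k)ᴴ * (Um d j)ᴴ) =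
        ∑ i : ZMod d, (Λ (j - i) : ℂ) • Aob d i) ∧
      (∀ k : ZMod d, ∑ j : ZMod d,
          (1 / d : ℂ) • (Um d j * Vm d k * T * (Vm d k)ᴴ * (Um d j)ᴴ) =
        ∑ i : ZMod d, (Γ (k - i) : ℂ) • Bob d i) := by
  have hA_cov (x y j : ZMod d) : weylConj d x y (smear Λ (Aob d) j) = smear Λ (Aob d) (j + x) :=
    map_smear _ Λ (Aob d) x (weylConj_Aob x y) j
  have hB_cov (x y k : ZMod d) : weylConj d x y (smear Γ (Bob d) k) = smear Γ (Bob d) (k + y) :=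
    map_smear _ Γ (Bob d) y (weylConj_Bob x y) k
  have hA_trace (j : ZMod d) : (smear Λ (Aob d) j).trace = 1 := by
    rw [trace_smear Λ (Aob d) trace_Aob, hΛsum, Complex.ofReal_one]
  simp only [one_div, ← weylConj_apply]
  exact ⟨covariantSeed d C, posSemidef_covariantSeed hpos, trace_covariantSeed hmargA hA_trace,
    sum_right_weylConj_covariantSeed hmargA hA_cov, sum_left_weylConj_covariantSeed hmargB hB_cov⟩

theorem jointly_measurable_implies_covariant_joint (d : ℕ) (hd : 2 ≤ d) [NeZero d]
    (Λ Γ : ZMod d → ℝ) (hΛpos : ∀ i, 0 ≤ Λ i) (hΛsum : ∑ i : ZMod d, Λ i = 1)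
    (hΓpos : ∀ i, 0 ≤ Γ i) (hΓsum : ∑ i : ZMod d, Γ i = 1)
    (C : ZMod d → ZMod d → Matrix (ZMod d) (ZMod d) ℂ)
    (hpos : ∀ j k, (C j k).PosSemidef)
    (hmargA : ∀ j, ∑ k : ZMod d, C j k = ∑ i : ZMod d, (Λ (j - i) : ℂ) • Aob d i)
    (hmargB : ∀ k, ∑ j : ZMod d, C j k = ∑ i : ZMod d, (Γ (k - i) : ℂ) • Bob d i) :
    ∃ T : Matrix (ZMod d) (ZMod d) ℂ, T.PosSemidef ∧ T.trace = 1 ∧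
      (∀ j : ZMod d, ∑ k : ZMod d,
          (1 / d : ℂ) • (Um d j * Vm d k * T * (Vm d k)ᴴ * (Um d j)ᴴ) =
        ∑ i : ZMod d, (Λ (j - i) : ℂ) • Aob d i) ∧
      (∀ k : ZMod d, ∑ j : ZMod d,
          (1 / d : ℂ) • (Um d j * Vm d k * T * (Vm d k)ᴴ * (Um d j)ᴴ) =
        ∑ i : ZMod d, (Γ (k - i) : ℂ) • Bob d i) :=
  jointly_measurable_implies_covariant_joint_general d Λ Γ hΛsum C hpos hmargA hmargB
end

section
/- Let T = |χ_λ⟩⟨χ_λ| with χ_λ = α_λ φ_0 + β_λ ψ_0, where α_λ = (1/√d)[√((d−1)λ+1) − √(1−λ)] and β_λ = √(1−λ), 0 < λ < 1. Then tr[T U_x V_y] = α_λ² δ_{x,0} + β_λ² δ_{y,0} + (α_λ β_λ/√d)(ω^{−xy} + 1), and this is nonzero for all x, y ∈ Z_d if and only if d is odd. -/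
open Matrix Kronecker Finset
open scoped ComplexOrder

/-! The vector χ is `α φ₀ + (β/√d)·(1,…,1)` with real coefficients, so `tr[T U_x V_y]` is an
explicit character sum in which the only non-real quantity is `ω^{-xy}`. When `x = 0` or `y = 0`
the trace is a positive real; otherwise it is a positive multiple of `ω^{-xy} + 1`, which vanishes
for some `x, y` exactly when `-1` is a `d`-th root of unity, i.e. when `d` is even. -/

namespace ZMod

lemma sum_stdAddChar_mul {d : ℕ} [NeZero d] (y : ZMod d) :
    ∑ i : ZMod d, stdAddChar (y * i) = if y = 0 then (d : ℂ) else 0 := by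
  simp_rw [mul_comm y]
  rw [AddChar.sum_mulShift y (isPrimitive_stdAddChar d), card]
  split_ifs <;> simp

lemma stdAddChar_ne_neg_one_of_odd {d : ℕ} [NeZero d] (hd : Odd d) (z : ZMod d) :
    stdAddChar z ≠ -1 := by
  intro h
  have h2 : stdAddChar (((2 : ℕ) : ZMod d) * z) = stdAddChar (0 : ZMod d) := by
    rw [AddChar.map_zero_eq_one, Nat.cast_ofNat, two_mul, AddChar.map_add_eq_mul, h]
    norm_num
  have hz : z = 0 :=
    ((isUnit_iff_coprime 2 d).mpr (Nat.coprime_two_left.mpr hd)).mul_right_eq_zero.mp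
      (injective_stdAddChar h2)
  rw [hz, AddChar.map_zero_eq_one] at h
  norm_num at h

lemma stdAddChar_half {k : ℕ} [NeZero (k + k)] : stdAddChar (k : ZMod (k + k)) = -1 := by
  have hk : (k : ℂ) ≠ 0 := Nat.cast_ne_zero.mpr (by have := NeZero.ne (k + k); omega)
  rw [← Int.cast_natCast, stdAddChar_coe, ← Complex.exp_pi_mul_I]
  congr 1
  push_cast
  field_simp
  ring

end ZMod

lemma ww_pow_val_s18 {d : ℕ} [NeZero d] (j : ZMod d) : ww d ^ j.val = ZMod.stdAddChar j := by
  rw [ZMod.stdAddChar_apply, ZMod.toCircle_apply, ww, ← Complex.exp_nat_mul]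
  congr 1
  ring

lemma inv_ww_pow_val {d : ℕ} [NeZero d] (j : ZMod d) :
    (ww d)⁻¹ ^ j.val = ZMod.stdAddChar (-j) := by
  rw [inv_pow, ww_pow_val_s18, AddChar.map_neg_eq_inv]

lemma mul_Um_apply {d : ℕ} [NeZero d] (A : Matrix (ZMod d) (ZMod d) ℂ) (x i j : ZMod d) :
    (A * Um d x) i j = A i (j + x) := by
  simp [Matrix.mul_apply, Um]

lemma trace_mul_Um_mul_Vm {d : ℕ} [NeZero d] (A : Matrix (ZMod d) (ZMod d) ℂ) (x y : ZMod d) :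
    trace (A * Um d x * Vm d y) = ∑ i, A i (i + x) * ZMod.stdAddChar (y * i) := by
  simp [Matrix.trace, Vm, Matrix.mul_diagonal, mul_Um_apply, ww_pow_val_s18]

lemma psiV_zero {d : ℕ} [NeZero d] : psiV d 0 = fun _ => ((1 / Real.sqrt d : ℝ) : ℂ) := by
  ext i
  simp [psiV, Fm, phiV, Matrix.mulVec, dotProduct, Pi.single_apply]

lemma sum_phiV_add_const_mul_stdAddChar {d : ℕ} [NeZero d] (a c : ℂ) (x y : ZMod d) :
    ∑ i, (a * phiV d 0 i + c) * (a * phiV d 0 (i + x) + c) * ZMod.stdAddChar (y * i) =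
      a ^ 2 * (if x = 0 then 1 else 0) + a * c * (ZMod.stdAddChar (-(x * y)) + 1) +
        c ^ 2 * (if y = 0 then (d : ℂ) else 0) := by
  simp only [phiV, Pi.single_apply, add_mul, mul_add, Finset.sum_add_distrib,
    add_eq_zero_iff_eq_neg, mul_ite, ite_mul, mul_one, mul_zero, zero_mul, Finset.sum_ite_eq',
    Finset.mem_univ, if_true, ← Finset.mul_sum, ZMod.sum_stdAddChar_mul, neg_eq_zero,
    AddChar.map_zero_eq_one, show y * -x = -(x * y) by ring]
  obtain rfl | hx := eq_or_ne x 0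
  · simp only [if_true, zero_mul, neg_zero, AddChar.map_zero_eq_one]
    split_ifs <;> ring
  · simp only [hx, if_false]
    split_ifs <;> ring

lemma trace_vecMulVec_phiV_add_psiV_mul_Um_mul_Vm {d : ℕ} [NeZero d] (α β : ℝ)
    {χ : ZMod d → ℂ} (hχ : χ = fun i => (α : ℂ) * phiV d 0 i + (β : ℂ) * psiV d 0 i)
    (x y : ZMod d) :
    trace (vecMulVec χ (star χ) * Um d x * Vm d y) =
      (α : ℂ) ^ 2 * (if x = 0 then 1 else 0) + (β : ℂ) ^ 2 * (if y = 0 then 1 else 0) +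
        ((α * β : ℝ) : ℂ) / Real.sqrt d * ((ww d)⁻¹ ^ (x * y).val + 1) := by
  replace hχ : χ = fun i => (α : ℂ) * phiV d 0 i + (β / Real.sqrt d : ℂ) := by
    rw [hχ, psiV_zero]
    simp [div_eq_mul_inv]
  have hχ_star : star χ = χ := by
    rw [hχ]
    funext i
    simp [phiV, Pi.single_apply, apply_ite]
  have hsqrt : (Real.sqrt d : ℂ) ^ 2 = d := by
    rw [← Complex.ofReal_pow, Real.sq_sqrt (Nat.cast_nonneg d), Complex.ofReal_natCast]
  have hd : (d : ℂ) ≠ 0 := Nat.cast_ne_zero.mpr (NeZero.ne d)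
  simp only [trace_mul_Um_mul_Vm, vecMulVec_apply, hχ_star]
  rw [hχ, sum_phiV_add_const_mul_stdAddChar, inv_ww_pow_val]
  simp only [div_pow, hsqrt, mul_ite, mul_one, mul_zero, div_mul_cancel₀ _ hd, Complex.ofReal_mul]
  ring

lemma forall_ite_add_ite_add_phase_ne_zero_iff_odd {d : ℕ} [NeZero d] {p q r : ℝ} (hp : 0 ≤ p)
    (hq : 0 ≤ q) (hr : 0 < r) :
    (∀ x y : ZMod d, (p : ℂ) * (if x = 0 then 1 else 0) + (q : ℂ) * (if y = 0 then 1 else 0) +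
      (r : ℂ) * ((ww d)⁻¹ ^ (x * y).val + 1) ≠ 0) ↔ Odd d := by
  simp_rw [inv_ww_pow_val]
  constructor
  · intro h
    by_contra hodd
    obtain ⟨k, rfl⟩ := Nat.not_odd_iff_even.mp hodd
    have hk0 : k ≠ 0 := by have := NeZero.ne (k + k); omega
    have : Fact (1 < k + k) := ⟨by omega⟩
    have hk : (k : ZMod (k + k)) ≠ 0 := by
      rw [Ne, ZMod.natCast_eq_zero_iff]
      exact Nat.not_dvd_of_pos_of_lt (Nat.pos_of_ne_zero hk0) (by omega)
    apply h k 1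
    rw [if_neg hk, if_neg one_ne_zero, mul_one, AddChar.map_neg_eq_inv, ZMod.stdAddChar_half]
    norm_num
  · intro hodd x y
    by_cases hxy : x = 0 ∨ y = 0
    · have h0 : -(x * y) = 0 := by rcases hxy with rfl | rfl <;> simp
      rw [h0, AddChar.map_zero_eq_one]
      split_ifs <;> norm_cast <;> positivity
    · rw [not_or] at hxy
      rw [if_neg hxy.1, if_neg hxy.2, mul_zero, mul_zero, zero_add, zero_add]
      exact mul_ne_zero (Complex.ofReal_ne_zero.mpr hr.ne')
        fun h => ZMod.stdAddChar_ne_neg_one_of_odd hodd _ (eq_neg_of_add_eq_zero_left h)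

lemma alpha_pos {d l : ℝ} (hd : 1 ≤ d) (hl : 0 < l) (hl1 : l < 1) :
    0 < (1 / Real.sqrt d) * (Real.sqrt ((d - 1) * l + 1) - Real.sqrt (1 - l)) := by
  have : Real.sqrt (1 - l) < Real.sqrt ((d - 1) * l + 1) :=
    Real.sqrt_lt_sqrt (by linarith) (by nlinarith)
  have : 0 < Real.sqrt ((d - 1) * l + 1) - Real.sqrt (1 - l) := by linarith
  have : 0 < Real.sqrt d := Real.sqrt_pos.mpr (by linarith)
  positivity

theorem optimal_joint_observable_ic_iff_odd_general (d : ℕ) [NeZero d]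
    (l : ℝ) (hl : 0 < l) (hl1 : l < 1) :
    let αl : ℝ := (1 / Real.sqrt d) * (Real.sqrt ((d - 1) * l + 1) - Real.sqrt (1 - l))
    let βl : ℝ := Real.sqrt (1 - l)
    let χ : ZMod d → ℂ := fun i => (αl : ℂ) * phiV d 0 i + (βl : ℂ) * psiV d 0 i
    let T : Matrix (ZMod d) (ZMod d) ℂ := vecMulVec χ (star χ)
    (∀ x y : ZMod d,
      Matrix.trace (T * Um d x * Vm d y) =
        (αl : ℂ) ^ 2 * (if x = 0 then 1 else 0) + (βl : ℂ) ^ 2 * (if y = 0 then 1 else 0) +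
          ((αl * βl : ℝ) : ℂ) / Real.sqrt d * ((ww d)⁻¹ ^ (x * y).val + 1)) ∧
    ((∀ x y : ZMod d, Matrix.trace (T * Um d x * Vm d y) ≠ 0) ↔ Odd d) := by
  intro αl βl χ T
  have hα : 0 < αl := alpha_pos (Nat.one_le_cast.mpr NeZero.one_le) hl hl1
  have hβ : 0 < βl := Real.sqrt_pos.mpr (by linarith)
  have hsqrt_pos : 0 < Real.sqrt d := Real.sqrt_pos.mpr (Nat.cast_pos.mpr (NeZero.pos d))
  have htrace (x y : ZMod d) :=
    trace_vecMulVec_phiV_add_psiV_mul_Um_mul_Vm αl βl (χ := χ) rfl x y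
  refine ⟨htrace, ?_⟩
  simp only [T, htrace, ← Complex.ofReal_pow, ← Complex.ofReal_div]
  exact forall_ite_add_ite_add_phase_ne_zero_iff_odd (sq_nonneg _) (sq_nonneg _)
    (div_pos (mul_pos hα hβ) hsqrt_pos)

theorem optimal_joint_observable_ic_iff_odd (d : ℕ) (hd : 2 ≤ d) [NeZero d]
    (l : ℝ) (hl : 0 < l) (hl1 : l < 1) :
    let αl : ℝ := (1 / Real.sqrt d) * (Real.sqrt ((d - 1) * l + 1) - Real.sqrt (1 - l))
    let βl : ℝ := Real.sqrt (1 - l)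
    let χ : ZMod d → ℂ := fun i => (αl : ℂ) * phiV d 0 i + (βl : ℂ) * psiV d 0 i
    let T : Matrix (ZMod d) (ZMod d) ℂ := vecMulVec χ (star χ)
    (∀ x y : ZMod d,
      Matrix.trace (T * Um d x * Vm d y) =
        (αl : ℂ) ^ 2 * (if x = 0 then 1 else 0) + (βl : ℂ) ^ 2 * (if y = 0 then 1 else 0) +
          ((αl * βl : ℝ) : ℂ) / Real.sqrt d * ((ww d)⁻¹ ^ (x * y).val + 1)) ∧
    ((∀ x y : ZMod d, Matrix.trace (T * Um d x * Vm d y) ≠ 0) ↔ Odd d) :=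
  optimal_joint_observable_ic_iff_odd_general d l hl hl1
end
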